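/- arXiv:1410.5794 — 12 statements merged into one kernel-verified Lean document; each statement's English description precedes it below -/
import Mathlib

section
/- Let M be a complex matrix, let A=(a_1,...,a_s) be a tuple of distinct row indices and B=(b_1,...,b_s) a tuple of distinct column indices of the same length s, let a, ā be two further distinct row indices not occurring in A, and b, b̄ two further distinct column indices not occurring in B. Then the minors of M satisfy the Jacobi identity M^{A,B}·M^{aāA,bb̄B} − M^{aA,bB}·M^{āA,b̄B} + M^{āA,bB}·M^{aA,b̄B} = 0. -/
/-!
Jacobi's complementary-minor theorem: for a square matrix `N` with rows and columns split as
`m ⊕ n`, the `m × m` block of `adj N` has determinant `det N ^ (|m| - 1) · det N₂₂`. Taking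
determinants in `N · [[adj₁₁, 0], [adj₂₁, 1]] = [[det N • 1, N₁₂], [0, N₂₂]]` gives this identity
multiplied by `det N`; that factor can be cancelled for the generic matrix over `ℤ[Xᵢⱼ]`, and the
result specialises to every matrix. For `|m| = 2` the entries of the adjugate are signed
`(s + 1)`-minors, and the statement becomes the Desnanot–Jacobi identity for the matrix of `M`
with rows `aāA` and columns `bb̄B`.
-/

/-- The minor `M^{A,B}` of a matrix `M` with rows selected by the tuple `A`
and columns selected by the tuple `B`; for `s = 0` this equals `1`. -/
noncomputable def minor {I J : Type*} (M : I → J → ℂ) {s : ℕ}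
    (A : Fin s → I) (B : Fin s → J) : ℂ :=
  Matrix.det (Matrix.of fun α β => M (A α) (B β))

namespace Matrix

variable {m n R : Type*} [Fintype m] [Fintype n] [DecidableEq m] [DecidableEq n] [CommRing R]

lemma mul_fromBlocks_adjugate (N : Matrix (m ⊕ n) (m ⊕ n) R) :
    N * fromBlocks N.adjugate.toBlocks₁₁ 0 N.adjugate.toBlocks₂₁ 1 =
      fromBlocks (N.det • 1) N.toBlocks₁₂ 0 N.toBlocks₂₂ := by
  have hadj := congr_fun₂ (mul_adjugate N)
  ext (i | i) (j | j)
  · simpa [mul_apply, Fintype.sum_sum_type, toBlocks₁₁, toBlocks₂₁, one_apply]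
      using hadj (.inl i) (.inl j)
  · simp [mul_apply, Fintype.sum_sum_type, toBlocks₁₂, one_apply]
  · simpa [mul_apply, Fintype.sum_sum_type, toBlocks₁₁, toBlocks₂₁, one_apply]
      using hadj (.inr i) (.inl j)
  · simp [mul_apply, Fintype.sum_sum_type, toBlocks₂₂, one_apply]

lemma det_mul_det_adjugate_toBlocks₁₁ (N : Matrix (m ⊕ n) (m ⊕ n) R) :
    N.det * N.adjugate.toBlocks₁₁.det = N.det ^ Fintype.card m * N.toBlocks₂₂.det := by
  simpa [det_fromBlocks_zero₁₂, det_fromBlocks_zero₂₁, det_smul] using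
    congr_arg det (mul_fromBlocks_adjugate N)

lemma det_adjugate_toBlocks₁₁ [Nonempty m] (N : Matrix (m ⊕ n) (m ⊕ n) R) :
    N.adjugate.toBlocks₁₁.det = N.det ^ (Fintype.card m - 1) * N.toBlocks₂₂.det := by
  let X := mvPolynomialX (m ⊕ n) (m ⊕ n) ℤ
  suffices X.adjugate.toBlocks₁₁.det = X.det ^ (Fintype.card m - 1) * X.toBlocks₂₂.det by
    have h := congr_arg (MvPolynomial.aeval fun p : (m ⊕ n) × (m ⊕ n) => N p.1 p.2) this
    rw [map_mul, map_pow, AlgHom.map_det, AlgHom.map_det, AlgHom.map_det] at h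
    rw [← mvPolynomialX_mapMatrix_aeval ℤ N, ← AlgHom.map_adjugate]
    exact h
  apply mul_left_cancel₀ (det_mvPolynomialX_ne_zero _ ℤ)
  rw [det_mul_det_adjugate_toBlocks₁₁, ← mul_assoc, ← pow_succ',
    Nat.sub_add_cancel Fintype.card_pos]

theorem desnanot_jacobi {s : ℕ} (N : Matrix (Fin (s + 2)) (Fin (s + 2)) R) :
    N.det * (N.submatrix (Fin.succ ∘ Fin.succ) (Fin.succ ∘ Fin.succ)).det =
      (N.submatrix Fin.succ Fin.succ).det *
          (N.submatrix (Fin.succAbove 1) (Fin.succAbove 1)).det -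
        (N.submatrix (Fin.succAbove 1) Fin.succ).det *
          (N.submatrix Fin.succ (Fin.succAbove 1)).det := by
  let e : Fin 2 ⊕ Fin s ≃ Fin (s + 2) := finSumFinEquiv.trans (finCongr (add_comm 2 s))
  have he₀ : e (.inl 0) = 0 := rfl
  have he₁ : e (.inl 1) = 1 := rfl
  have he : ∀ i, e (.inr i) = i.succ.succ := fun i => Fin.ext (by simp [e])
  have hinner : (N.submatrix e e).toBlocks₂₂ =
      N.submatrix (Fin.succ ∘ Fin.succ) (Fin.succ ∘ Fin.succ) := by
    ext i j
    simp [toBlocks₂₂, he]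
  have h := det_adjugate_toBlocks₁₁ (N.submatrix e e)
  rw [det_submatrix_equiv_self, adjugate_submatrix_equiv_self, det_fin_two, hinner] at h
  simpa [toBlocks₁₁, he₀, he₁, adjugate_fin_succ_eq_det_submatrix] using h.symm

end Matrix

open Matrix

lemma Fin.cons_cons_comp_one_succAbove {β : Type*} {n : ℕ} (x y : β) (p : Fin n → β) :
    (Fin.cons x (Fin.cons y p) : Fin (n + 2) → β) ∘ (1 : Fin (n + 2)).succAbove =
      Fin.cons x p := by
  rw [← Fin.succ_zero_eq_one, Fin.cons_comp_succ_succAbove, Fin.removeNth_zero, Fin.tail_cons]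

lemma det_submatrix_of_eq_minor {I J : Type*} (M : I → J → ℂ) {k s : ℕ}
    (R : Fin k → I) (C : Fin k → J) (f g : Fin s → Fin k) :
    ((Matrix.of fun i j => M (R i) (C j)).submatrix f g).det = minor M (R ∘ f) (C ∘ g) :=
  rfl

theorem jacobi_identity_minors_general {I J : Type*} (M : I → J → ℂ) {s : ℕ}
    (A : Fin s → I) (B : Fin s → J)
    (a abar : I) (b bbar : J) :
    minor M A B * minor M (Fin.cons a (Fin.cons abar A)) (Fin.cons b (Fin.cons bbar B))
      - minor M (Fin.cons a A) (Fin.cons b B) * minor M (Fin.cons abar A) (Fin.cons bbar B)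
      + minor M (Fin.cons abar A) (Fin.cons b B) * minor M (Fin.cons a A) (Fin.cons bbar B)
      = 0 := by
  have h := desnanot_jacobi
    (Matrix.of fun i j => M ((Fin.cons a (Fin.cons abar A) : Fin (s + 2) → I) i)
      ((Fin.cons b (Fin.cons bbar B) : Fin (s + 2) → J) j))
  simp only [det_submatrix_of_eq_minor, Fin.cons_comp_succ, Fin.cons_cons_comp_one_succAbove,
    ← Function.comp_assoc] at h
  change minor M _ _ * minor M A B = _ at h
  linear_combination h

/-- Jacobi identity for minors:
`M^{A,B}·M^{aāA,bb̄B} − M^{aA,bB}·M^{āA,b̄B} + M^{āA,bB}·M^{aA,b̄B} = 0`. -/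
theorem jacobi_identity_minors {I J : Type*} (M : I → J → ℂ) {s : ℕ}
    (A : Fin s → I) (B : Fin s → J)
    (hA : Function.Injective A) (hB : Function.Injective B)
    (a abar : I) (b bbar : J)
    (haabar : a ≠ abar) (haA : ∀ α, a ≠ A α) (habarA : ∀ α, abar ≠ A α)
    (hbbbar : b ≠ bbar) (hbB : ∀ β, b ≠ B β) (hbbarB : ∀ β, bbar ≠ B β) :
    minor M A B * minor M (Fin.cons a (Fin.cons abar A)) (Fin.cons b (Fin.cons bbar B))
      - minor M (Fin.cons a A) (Fin.cons b B) * minor M (Fin.cons abar A) (Fin.cons bbar B)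
      + minor M (Fin.cons abar A) (Fin.cons b B) * minor M (Fin.cons a A) (Fin.cons bbar B)
      = 0 :=
  jacobi_identity_minors_general M A B a abar b bbar
end

section
/- Let M be a complex matrix, let A=(a_1,...,a_s) and B=(b_1,...,b_s) be tuples of distinct row and column indices of equal length, let a, ā be two further distinct row indices not occurring in A, and b̂, b, b̄ three further distinct column indices not occurring in B. Then M^{aāA,bb̄B}·M^{aA,b̂B} − M^{aA,bB}·M^{aāA,b̂b̄B} + M^{aA,b̄B}·M^{aāA,b̂bB} = 0. -/
theorem Fin.removeNth_succ_cons {n : ℕ} {β : Sort*} (x : β) (p : Fin (n + 1) → β)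
    (i : Fin (n + 1)) :
    i.succ.removeNth (Fin.cons x p : Fin (n + 2) → β) = Fin.cons x (i.removeNth p) :=
  Fin.cons_comp_succ_succAbove x p i

namespace Matrix

variable {R : Type*} [CommRing R] {n : ℕ}

theorem sum_negOnePow_det_removeNth_smul_eq_zero (v : Fin (n + 1) → Fin n → R) :
    ∑ i : Fin (n + 1), ((-1) ^ (i : ℕ) * det (of (i.removeNth v))) • v i = 0 := by
  ext k
  -- row `k` repeated on top: expanding the vanishing determinant along it gives coordinate `k`
  let N : Matrix (Fin (n + 1)) (Fin (n + 1)) R := of (Fin.cons (fun i => v i k) fun p i => v i p)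
  have hN : det N = 0 := det_zero_of_row_eq (Fin.succ_ne_zero k).symm (by ext; simp [N])
  have hrow : ∀ i, N 0 i = v i k := fun _ => rfl
  have hminor : ∀ i : Fin (n + 1), N.submatrix Fin.succ i.succAbove = (of (i.removeNth v))ᵀ :=
    fun _ => rfl
  rw [det_succ_row_zero] at hN
  simpa [hrow, hminor, mul_right_comm] using hN

theorem det_eq_of_row_eq_single (N : Matrix (Fin (n + 1)) (Fin (n + 1)) R)
    (i j : Fin (n + 1)) (hi : N i = Pi.single j 1) :
    det N = (-1) ^ (i + j : ℕ) * det (N.submatrix i.succAbove j.succAbove) := by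
  rw [det_succ_row N i, Fintype.sum_eq_single j fun k hk => by simp [hi, hk]]
  simp [hi]

def detCons₂ (C : Fin n → Fin (n + 2) → R) (x y : Fin (n + 2) → R) : R :=
  det (of (Fin.cons x (Fin.cons y C)))

variable (C : Fin n → Fin (n + 2) → R)

theorem detCons₂_sum_smul_left {ι : Type*} (s : Finset ι) (c : ι → R)
    (x : ι → Fin (n + 2) → R) (y : Fin (n + 2) → R) :
    detCons₂ C (∑ i ∈ s, c i • x i) y = ∑ i ∈ s, c i * detCons₂ C (x i) y := by
  let L := (detRowAlternating : (Fin (n + 2) → R) [⋀^Fin (n + 2)]→ₗ[R] R).toMultilinearMap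
    |>.toLinearMap (Fin.cons 0 (Fin.cons y C)) 0
  have hL : ∀ z, L z = detCons₂ C z y := fun z => by
    simp only [L, MultilinearMap.toLinearMap_apply, Fin.update_cons_zero]
    rfl
  simp only [← hL, map_sum, map_smul, smul_eq_mul]

theorem detCons₂_zero_left (y : Fin (n + 2) → R) : detCons₂ C 0 y = 0 :=
  det_eq_zero_of_row_eq_zero 0 fun _ => rfl

theorem detCons₂_row_left_eq_zero (k : Fin n) (y : Fin (n + 2) → R) :
    detCons₂ C (C k) y = 0 :=
  det_zero_of_row_eq (i := 0) (j := k.succ.succ) (Fin.succ_ne_zero _).symm rfl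

theorem detCons₂_plucker (u v w e : Fin (n + 2) → R) :
    detCons₂ C v w * detCons₂ C u e - detCons₂ C u w * detCons₂ C v e
      + detCons₂ C u v * detCons₂ C w e = 0 := by
  have h := congrArg (detCons₂ C · e)
    (sum_negOnePow_det_removeNth_smul_eq_zero (Fin.cons u (Fin.cons v (Fin.cons w C))))
  rw [detCons₂_sum_smul_left, detCons₂_zero_left] at h
  simp only [Fin.sum_univ_succ, Fin.cons_zero, Fin.cons_succ, Fin.removeNth_succ_cons,
    Fin.removeNth_zero, Fin.tail_cons, detCons₂_row_left_eq_zero, mul_zero, Finset.sum_const_zero,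
    add_zero, Fin.val_zero, Fin.val_succ] at h
  unfold detCons₂ at h ⊢
  linear_combination h

end Matrix

open Matrix

section Minor

variable {I J : Type*} (M : I → J → ℂ) {s : ℕ}

theorem minor_eq_det_columns (A : Fin s → I) (B : Fin s → J) :
    minor M A B = det (of ((fun j α => M (A α) j) ∘ B)) := by
  rw [minor, ← det_transpose]
  rfl

theorem minor_cons_cons (A : Fin (s + 2) → I) (B : Fin s → J) (x y : J) :
    minor M A (Fin.cons x (Fin.cons y B)) =
      detCons₂ (fun β α => M (A α) (B β)) (fun α => M (A α) x) (fun α => M (A α) y) := by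
  rw [minor_eq_det_columns, Fin.comp_cons, Fin.comp_cons]
  rfl

theorem detCons₂_single_eq_minor_removeNth (A : Fin (s + 2) → I) (B : Fin s → J)
    (p : Fin (s + 2)) (x : J) :
    detCons₂ (fun β α => M (A α) (B β)) (fun α => M (A α) x) (Pi.single p 1) =
      (-1) ^ (1 + p : ℕ) * minor M (p.removeNth A) (Fin.cons x B) := by
  rw [detCons₂, det_eq_of_row_eq_single _ 1 p rfl, minor_eq_det_columns, Fin.val_one]
  congr 2
  ext k l
  cases k using Fin.cases <;> simp [Fin.removeNth]

end Minor

theorem degenerate_minor_identity_general {I J : Type*} (M : I → J → ℂ) {s : ℕ}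
    (A : Fin s → I) (B : Fin s → J)
    (a abar : I) (bhat b bbar : J) :
    minor M (Fin.cons a (Fin.cons abar A)) (Fin.cons b (Fin.cons bbar B)) *
        minor M (Fin.cons a A) (Fin.cons bhat B)
      - minor M (Fin.cons a A) (Fin.cons b B) *
          minor M (Fin.cons a (Fin.cons abar A)) (Fin.cons bhat (Fin.cons bbar B))
      + minor M (Fin.cons a A) (Fin.cons bbar B) *
          minor M (Fin.cons a (Fin.cons abar A)) (Fin.cons bhat (Fin.cons b B))
      = 0 := by
  set r : Fin (s + 2) → I := Fin.cons a (Fin.cons abar A)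
  set C : Fin s → Fin (s + 2) → ℂ := fun β α => M (r α) (B β)
  set col : J → Fin (s + 2) → ℂ := fun j α => M (r α) j
  have hrows : (1 : Fin (s + 2)).removeNth r = Fin.cons a A := by
    rw [← Fin.succ_zero_eq_one, Fin.removeNth_succ_cons, Fin.removeNth_zero, Fin.tail_cons]
  have hsmall : ∀ x,
      minor M (Fin.cons a A) (Fin.cons x B) = detCons₂ C (col x) (Pi.single 1 1) :=
    fun x => by simpa [hrows] using (detCons₂_single_eq_minor_removeNth M r B 1 x).symm
  simp only [minor_cons_cons, hsmall]
  linear_combination detCons₂_plucker C (col bhat) (col b) (col bbar) (Pi.single 1 1)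

/-- The degenerate Jacobi-type identity
`M^{aāA,bb̄B}·M^{aA,b̂B} − M^{aA,bB}·M^{aāA,b̂b̄B} + M^{aA,b̄B}·M^{aāA,b̂bB} = 0`. -/
theorem degenerate_minor_identity {I J : Type*} (M : I → J → ℂ) {s : ℕ}
    (A : Fin s → I) (B : Fin s → J)
    (hA : Function.Injective A) (hB : Function.Injective B)
    (a abar : I) (bhat b bbar : J)
    (hr : a ≠ abar) (hrA1 : ∀ α, a ≠ A α) (hrA2 : ∀ α, abar ≠ A α)
    (hc1 : bhat ≠ b) (hc2 : bhat ≠ bbar) (hc3 : b ≠ bbar)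
    (hcB1 : ∀ β, bhat ≠ B β) (hcB2 : ∀ β, b ≠ B β) (hcB3 : ∀ β, bbar ≠ B β) :
    minor M (Fin.cons a (Fin.cons abar A)) (Fin.cons b (Fin.cons bbar B)) *
        minor M (Fin.cons a A) (Fin.cons bhat B)
      - minor M (Fin.cons a A) (Fin.cons b B) *
          minor M (Fin.cons a (Fin.cons abar A)) (Fin.cons bhat (Fin.cons bbar B))
      + minor M (Fin.cons a A) (Fin.cons bbar B) *
          minor M (Fin.cons a (Fin.cons abar A)) (Fin.cons bhat (Fin.cons b B))
      = 0 :=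
  degenerate_minor_identity_general M A B a abar bhat b bbar
end

section
/- Let M be a complex matrix, let A=(a_1,...,a_s) and B=(b_1,...,b_s) be tuples of distinct row and column indices of equal length, let â, a, ā be three further distinct row indices not occurring in A, and b̂, b̃, b, b̄ four further distinct column indices not occurring in B. Define the two 6-vectors W^{âaā,b̂bb̄} = (M^{âA,b̂B}, M^{âaāA,b̂bb̄B}, M^{âaA,b̂bB}, M^{âāA,b̂b̄B}, M^{âāA,b̂bB}, M^{âaA,b̂b̄B}) and W^{âaā,b̃bb̄} = (M^{âA,b̃B}, M^{âaāA,b̃bb̄B}, M^{âaA,b̃bB}, M^{âāA,b̃b̄B}, M^{âāA,b̃bB}, M^{âaA,b̃b̄B}). Then ⟨W^{âaā,b̂bb̄}, W^{âaā,b̃bb̄}⟩ = 0. -/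
/-- The inner product on `ℂ⁶` with respect to the block-diagonal metric
`diag([[0,1],[1,0]], −[[0,1],[1,0]], [[0,1],[1,0]])`. -/
def form (X Y : Fin 6 → ℂ) : ℂ :=
  X 0 * Y 1 + X 1 * Y 0 - X 2 * Y 3 - X 3 * Y 2 + X 4 * Y 5 + X 5 * Y 4

/-- The 6-vector
`W^{âaā,b̂bb̄} = (M^{âA,b̂B}, M^{âaāA,b̂bb̄B}, M^{âaA,b̂bB}, M^{âāA,b̂b̄B}, M^{âāA,b̂bB}, M^{âaA,b̂b̄B})`. -/
noncomputable def wvec {I J : Type*} (M : I → J → ℂ) {s : ℕ}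
    (A : Fin s → I) (B : Fin s → J)
    (ahat a abar : I) (bhat b bbar : J) : Fin 6 → ℂ :=
  ![minor M (Fin.cons ahat A) (Fin.cons bhat B),
    minor M (Fin.cons ahat (Fin.cons a (Fin.cons abar A)))
      (Fin.cons bhat (Fin.cons b (Fin.cons bbar B))),
    minor M (Fin.cons ahat (Fin.cons a A)) (Fin.cons bhat (Fin.cons b B)),
    minor M (Fin.cons ahat (Fin.cons abar A)) (Fin.cons bhat (Fin.cons bbar B)),
    minor M (Fin.cons ahat (Fin.cons abar A)) (Fin.cons bhat (Fin.cons b B)),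
    minor M (Fin.cons ahat (Fin.cons a A)) (Fin.cons bhat (Fin.cons bbar B))]

/-! If `D = M_{A,B}` is invertible, every bordered minor `M^{XA,YB}` equals `det D` times the
corresponding minor of the Schur complement `S = M - M_{·,B} D⁻¹ M_{A,·}`. Each product in
`⟨W, W̃⟩` then becomes `(det D)²` times a polynomial in the `3 × 4` entries of `S` at the rows
`â, a, ā` and columns `b̂, b̃, b, b̄`, and these cancel identically.

For arbitrary `M`, replace it by `M + X E` over `R[X]`, where `E` has entries `1` exactly at the
positions `(A α, B α)`: its `A,B`-minor is the characteristic polynomial of `-D`, which is monic,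
so it becomes invertible in a localization into which `R[X]` embeds; specialize at `X = 0`. -/

open Matrix Polynomial

section ConsSumEquiv

variable {α : Type*} {k s : ℕ}

def consSumEquiv (k s : ℕ) : Fin k ⊕ Fin s ≃ Fin (s + k) :=
  finSumFinEquiv.trans (finCongr (Nat.add_comm k s))

theorem comp_consSumEquiv_zero (A : Fin s → α) : A ∘ consSumEquiv 0 s = Sum.elim ![] A := by
  ext (i | j)
  · exact i.elim0
  · simp [consSumEquiv]

theorem cons_comp_consSumEquiv {r : Fin (s + k) → α} {X : Fin k → α} {A : Fin s → α}
    (h : r ∘ consSumEquiv k s = Sum.elim X A) (x : α) :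
    (Fin.cons x r : Fin (s + (k + 1)) → α) ∘ consSumEquiv (k + 1) s =
      Sum.elim (Fin.cons x X) A := by
  ext (i | j)
  · induction i using Fin.cases with
    | zero =>
      have : consSumEquiv (k + 1) s (.inl 0) = 0 := Fin.ext (by simp [consSumEquiv])
      simp [this]
    | succ i =>
      have : consSumEquiv (k + 1) s (.inl i.succ) = (consSumEquiv k s (.inl i)).succ :=
        Fin.ext (by simp [consSumEquiv])
      simpa [this] using congrFun h (.inl i)
  · have : consSumEquiv (k + 1) s (.inr j) = (consSumEquiv k s (.inr j)).succ :=
      Fin.ext (by simp [consSumEquiv]; omega)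
    simpa [this] using congrFun h (.inr j)

end ConsSumEquiv

section SchurComplement

variable {R : Type*} [CommRing R] {I J : Type*} {s : ℕ}

noncomputable def schurComplement (M : Matrix I J R) (A : Fin s → I) (B : Fin s → J) :
    Matrix I J R :=
  M - M.submatrix id B * (M.submatrix A B)⁻¹ * M.submatrix A id

theorem det_submatrix_sumElim (M : Matrix I J R) (A : Fin s → I) (B : Fin s → J)
    [Invertible (M.submatrix A B)] {κ : Type*} [Fintype κ] [DecidableEq κ]
    (X : κ → I) (Y : κ → J) :
    (M.submatrix (Sum.elim X A) (Sum.elim Y B)).det =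
      (M.submatrix A B).det * ((schurComplement M A B).submatrix X Y).det := by
  have hblocks : M.submatrix (Sum.elim X A) (Sum.elim Y B) =
      fromBlocks (M.submatrix X Y) (M.submatrix X B) (M.submatrix A Y) (M.submatrix A B) := by
    ext (i | i) (j | j) <;> rfl
  rw [hblocks, det_fromBlocks₂₂]
  congr 2
  ext i j
  simp [schurComplement, mul_apply, invOf_eq_nonsing_inv]

theorem det_submatrix_of_comp_consSumEquiv (M : Matrix I J R) (A : Fin s → I) (B : Fin s → J)
    [Invertible (M.submatrix A B)] {k : ℕ} {r : Fin (s + k) → I} {c : Fin (s + k) → J}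
    {X : Fin k → I} {Y : Fin k → J}
    (hr : r ∘ consSumEquiv k s = Sum.elim X A) (hc : c ∘ consSumEquiv k s = Sum.elim Y B) :
    (M.submatrix r c).det =
      (M.submatrix A B).det * ((schurComplement M A B).submatrix X Y).det := by
  rw [← det_submatrix_sumElim, ← hr, ← hc, ← submatrix_submatrix, det_submatrix_equiv_self]

variable (M : Matrix I J R) (A : Fin s → I) (B : Fin s → J) [Invertible (M.submatrix A B)]

theorem det_submatrix_cons (x : I) (y : J) :
    (M.submatrix (Fin.cons x A) (Fin.cons y B)).det =
      (M.submatrix A B).det * schurComplement M A B x y := by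
  rw [det_submatrix_of_comp_consSumEquiv M A B
    (cons_comp_consSumEquiv (comp_consSumEquiv_zero A) x)
    (cons_comp_consSumEquiv (comp_consSumEquiv_zero B) y), det_fin_one]
  rfl

theorem det_submatrix_cons_cons (x x' : I) (y y' : J) :
    (M.submatrix (Fin.cons x (Fin.cons x' A)) (Fin.cons y (Fin.cons y' B))).det =
      (M.submatrix A B).det *
        (schurComplement M A B x y * schurComplement M A B x' y' -
          schurComplement M A B x y' * schurComplement M A B x' y) := by
  rw [det_submatrix_of_comp_consSumEquiv M A B
    (cons_comp_consSumEquiv (cons_comp_consSumEquiv (comp_consSumEquiv_zero A) x') x)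
    (cons_comp_consSumEquiv (cons_comp_consSumEquiv (comp_consSumEquiv_zero B) y') y),
    det_fin_two]
  rfl

theorem det_submatrix_cons_cons_cons (x x' x'' : I) (y y' y'' : J) :
    (M.submatrix (Fin.cons x (Fin.cons x' (Fin.cons x'' A)))
        (Fin.cons y (Fin.cons y' (Fin.cons y'' B)))).det =
      (M.submatrix A B).det *
        (schurComplement M A B x y * schurComplement M A B x' y' * schurComplement M A B x'' y''
          - schurComplement M A B x y * schurComplement M A B x' y'' * schurComplement M A B x'' y'
          - schurComplement M A B x y' * schurComplement M A B x' y * schurComplement M A B x'' y''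
          + schurComplement M A B x y' * schurComplement M A B x' y'' * schurComplement M A B x'' y
          + schurComplement M A B x y'' * schurComplement M A B x' y * schurComplement M A B x'' y'
          - schurComplement M A B x y'' * schurComplement M A B x' y' *
              schurComplement M A B x'' y) := by
  rw [det_submatrix_of_comp_consSumEquiv M A B
    (cons_comp_consSumEquiv (cons_comp_consSumEquiv
      (cons_comp_consSumEquiv (comp_consSumEquiv_zero A) x'') x') x)
    (cons_comp_consSumEquiv (cons_comp_consSumEquiv
      (cons_comp_consSumEquiv (comp_consSumEquiv_zero B) y'') y') y),
    det_fin_three]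
  rfl

end SchurComplement

section Orthogonality

variable {R : Type*} [CommRing R] {I J : Type*} {s : ℕ}

/- `form` and `wvec` over an arbitrary commutative ring, as the perturbation argument leaves `ℂ`;
at `R = ℂ` they agree with `form` and `wvec` definitionally. -/
def formR (X Y : Fin 6 → R) : R :=
  X 0 * Y 1 + X 1 * Y 0 - X 2 * Y 3 - X 3 * Y 2 + X 4 * Y 5 + X 5 * Y 4

noncomputable def wvecR (M : Matrix I J R) (A : Fin s → I) (B : Fin s → J)
    (ahat a abar : I) (bhat b bbar : J) : Fin 6 → R :=
  ![(M.submatrix (Fin.cons ahat A) (Fin.cons bhat B)).det,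
    (M.submatrix (Fin.cons ahat (Fin.cons a (Fin.cons abar A)))
      (Fin.cons bhat (Fin.cons b (Fin.cons bbar B)))).det,
    (M.submatrix (Fin.cons ahat (Fin.cons a A)) (Fin.cons bhat (Fin.cons b B))).det,
    (M.submatrix (Fin.cons ahat (Fin.cons abar A)) (Fin.cons bhat (Fin.cons bbar B))).det,
    (M.submatrix (Fin.cons ahat (Fin.cons abar A)) (Fin.cons bhat (Fin.cons b B))).det,
    (M.submatrix (Fin.cons ahat (Fin.cons a A)) (Fin.cons bhat (Fin.cons bbar B))).det]

theorem formR_wvecR_eq_zero_of_invertible (M : Matrix I J R) (A : Fin s → I) (B : Fin s → J)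
    [Invertible (M.submatrix A B)] (ahat a abar : I) (bhat btilde b bbar : J) :
    formR (wvecR M A B ahat a abar bhat b bbar) (wvecR M A B ahat a abar btilde b bbar) = 0 := by
  simp only [formR, wvecR, cons_val_zero, cons_val_one, cons_val, det_submatrix_cons,
    det_submatrix_cons_cons, det_submatrix_cons_cons_cons]
  ring

theorem map_formR_wvecR {S : Type*} [CommRing S] (f : R →+* S) (M : Matrix I J R)
    (A : Fin s → I) (B : Fin s → J) (ahat a abar : I) (bhat btilde b bbar : J) :
    f (formR (wvecR M A B ahat a abar bhat b bbar) (wvecR M A B ahat a abar btilde b bbar)) =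
      formR (wvecR (M.map f) A B ahat a abar bhat b bbar)
        (wvecR (M.map f) A B ahat a abar btilde b bbar) := by
  simp only [formR, wvecR, cons_val_zero, cons_val_one, cons_val, map_add, map_sub, map_mul,
    RingHom.map_det, RingHom.mapMatrix_apply, submatrix_map]

open Classical in
noncomputable def tupleIndicator (A : Fin s → I) (B : Fin s → J) : Matrix I J R :=
  of fun i j => if ∃ α, A α = i ∧ B α = j then 1 else 0

theorem submatrix_tupleIndicator {A : Fin s → I} {B : Fin s → J}
    (hA : Function.Injective A) (hB : Function.Injective B) :
    (tupleIndicator A B : Matrix I J R).submatrix A B = 1 := by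
  refine Matrix.ext fun α β => ?_
  by_cases h : α = β
  · subst h
    simp [tupleIndicator, show ∃ γ, A γ = A α ∧ B γ = B α from ⟨α, rfl, rfl⟩]
  · have : ¬ ∃ γ, A γ = A α ∧ B γ = B β := fun ⟨γ, h₁, h₂⟩ => h ((hA h₁).symm.trans (hB h₂))
    simp [tupleIndicator, this, one_apply_ne h]

theorem submatrix_map_C_add_X_smul_tupleIndicator (M : Matrix I J R) {A : Fin s → I}
    {B : Fin s → J} (hA : Function.Injective A) (hB : Function.Injective B) :
    (M.map C + (X : R[X]) • tupleIndicator A B).submatrix A B =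
      charmatrix (-M.submatrix A B) := by
  change (M.submatrix A B).map C + (X : R[X]) • (tupleIndicator A B).submatrix A B = _
  rw [submatrix_tupleIndicator hA hB, charmatrix, map_neg, sub_neg_eq_add, add_comm,
    smul_one_eq_diagonal, scalar_apply]
  rfl

theorem map_evalRingHom_zero_map_C_add_X_smul_tupleIndicator (M : Matrix I J R) (A : Fin s → I)
    (B : Fin s → J) :
    (M.map C + (X : R[X]) • tupleIndicator A B).map (evalRingHom 0) = M := by
  ext i j
  simp [tupleIndicator, apply_ite]

theorem formR_wvecR_eq_zero (M : Matrix I J R) {A : Fin s → I} {B : Fin s → J}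
    (hA : Function.Injective A) (hB : Function.Injective B)
    (ahat a abar : I) (bhat btilde b bbar : J) :
    formR (wvecR M A B ahat a abar bhat b bbar) (wvecR M A B ahat a abar btilde b bbar) = 0 := by
  set M' : Matrix I J R[X] := M.map C + (X : R[X]) • tupleIndicator A B
  have hdet : (M'.submatrix A B).det ∈ nonZeroDivisors R[X] := by
    rw [submatrix_map_C_add_X_smul_tupleIndicator M hA hB]
    exact (charpoly_monic _).mem_nonZeroDivisors
  let L := Localization.Away (M'.submatrix A B).det
  let f := algebraMap R[X] L
  have hf : Function.Injective f := IsLocalization.injective L (Submonoid.powers_le.2 hdet)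
  have : Invertible ((M'.map f).submatrix A B) := invertibleOfIsUnitDet _ <|
    RingHom.map_det f (M'.submatrix A B) ▸ IsLocalization.Away.algebraMap_isUnit _
  have hL := formR_wvecR_eq_zero_of_invertible (M'.map f) A B ahat a abar bhat btilde b bbar
  rw [← map_formR_wvecR, ← map_zero f] at hL
  rw [← map_evalRingHom_zero_map_C_add_X_smul_tupleIndicator M A B, ← map_formR_wvecR, hf hL, map_zero]

end Orthogonality

theorem wvec_orthogonality_general {I J : Type*} (M : I → J → ℂ) {s : ℕ}
    (A : Fin s → I) (B : Fin s → J)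
    (hA : Function.Injective A) (hB : Function.Injective B)
    (ahat a abar : I) (bhat btilde b bbar : J) :
    form (wvec M A B ahat a abar bhat b bbar)
      (wvec M A B ahat a abar btilde b bbar) = 0 :=
  formR_wvecR_eq_zero M hA hB ahat a abar bhat btilde b bbar

/-- `⟨W^{âaā,b̂bb̄}, W^{âaā,b̃bb̄}⟩ = 0`. -/
theorem wvec_orthogonality {I J : Type*} (M : I → J → ℂ) {s : ℕ}
    (A : Fin s → I) (B : Fin s → J)
    (hA : Function.Injective A) (hB : Function.Injective B)
    (ahat a abar : I) (bhat btilde b bbar : J)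
    (hr1 : ahat ≠ a) (hr2 : ahat ≠ abar) (hr3 : a ≠ abar)
    (hrA1 : ∀ α, ahat ≠ A α) (hrA2 : ∀ α, a ≠ A α) (hrA3 : ∀ α, abar ≠ A α)
    (hc1 : bhat ≠ btilde) (hc2 : bhat ≠ b) (hc3 : bhat ≠ bbar)
    (hc4 : btilde ≠ b) (hc5 : btilde ≠ bbar) (hc6 : b ≠ bbar)
    (hcB1 : ∀ β, bhat ≠ B β) (hcB2 : ∀ β, btilde ≠ B β)
    (hcB3 : ∀ β, b ≠ B β) (hcB4 : ∀ β, bbar ≠ B β) :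
    form (wvec M A B ahat a abar bhat b bbar)
      (wvec M A B ahat a abar btilde b bbar) = 0 :=
  wvec_orthogonality_general M A B hA hB ahat a abar bhat btilde b bbar
end

section
/- Let M be a complex matrix whose rows and columns are both indexed by a finite set I, let l ∈ I with M^{ll} ≠ 0, and define on indices i,k ∈ I∖{l} the updated matrix N by N^{ik} = M^{ik} − M^{il}M^{lk}/M^{ll}. Then for any tuples A of distinct row indices in I∖{l} and B of distinct column indices in I∖{l} of equal length, the minors satisfy N^{A,B} = M^{lA,lB}/M^{ll}, where lA and lB denote the tuples obtained by prepending l. -/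
namespace Matrix

variable {K : Type*} [Field K] {n : ℕ}

def pivotSchurComplement (M : Matrix (Fin (n + 1)) (Fin (n + 1)) K) : Matrix (Fin n) (Fin n) K :=
  of fun i j => M i.succ j.succ - M i.succ 0 * M 0 j.succ / M 0 0

theorem det_eq_mul_det_pivotSchurComplement (M : Matrix (Fin (n + 1)) (Fin (n + 1)) K)
    (h : M 0 0 ≠ 0) : M.det = M 0 0 * M.pivotSchurComplement.det := by
  set c : Fin (n + 1) → K := Fin.cons 0 fun i => -(M i.succ 0 / M 0 0) with hc
  set E : Matrix (Fin (n + 1)) (Fin (n + 1)) K := of fun i j => M i j + c i * M 0 j with hE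
  have hrow : E.det = M.det :=
    det_eq_of_forall_row_eq_smul_add_const _ 0 rfl fun _ _ => rfl
  have hcol : ∀ i : Fin n, E i.succ 0 = 0 := fun i => by simp [hE, hc, h]
  rw [← hrow, det_succ_column_zero, Fin.sum_univ_succ]
  simp only [hcol, zero_mul, mul_zero, Finset.sum_const_zero, add_zero]
  have hpivot : E.submatrix (Fin.succAbove 0) Fin.succ = M.pivotSchurComplement := by
    ext i j
    simp [hE, hc, pivotSchurComplement, div_mul_eq_mul_div]
    ring
  have hE00 : E 0 0 = M 0 0 := by simp [hE, hc]
  rw [hpivot, hE00, Fin.val_zero, pow_zero, one_mul]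

end Matrix

theorem minor_cons_cons_s4 {I J : Type*} (M : I → J → ℂ) (l : I) (m : J) (hl : M l m ≠ 0)
    {s : ℕ} (A : Fin s → I) (B : Fin s → J) :
    minor M (Fin.cons l A) (Fin.cons m B) =
      M l m * minor (fun i k => M i k - M i m * M l k / M l m) A B :=
  Matrix.det_eq_mul_det_pivotSchurComplement _ hl

theorem minor_evolution_general {I : Type*} (M : I → I → ℂ) (l : I) (hl : M l l ≠ 0)
    (N : I → I → ℂ)
    (hN : ∀ i k, i ≠ l → k ≠ l → N i k = M i k - M i l * M l k / M l l)
    {s : ℕ} (A B : Fin s → I)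
    (hAl : ∀ α, A α ≠ l) (hBl : ∀ β, B β ≠ l) :
    minor N A B = minor M (Fin.cons l A) (Fin.cons l B) / M l l := by
  have hNAB : minor N A B = minor (fun i k => M i k - M i l * M l k / M l l) A B :=
    congrArg Matrix.det <| Matrix.ext fun α β => hN _ _ (hAl α) (hBl β)
  rw [minor_cons_cons_s4 M l l hl, hNAB, mul_div_cancel_left₀ _ hl]

/-- If `N^{ik} = M^{ik} − M^{il}M^{lk}/M^{ll}` on the indices different from `l`,
then for tuples `A`, `B` of distinct indices avoiding `l`,
the minors evolve by `N^{A,B} = M^{lA,lB}/M^{ll}`. -/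
theorem minor_evolution {I : Type*} (M : I → I → ℂ) (l : I) (hl : M l l ≠ 0)
    (N : I → I → ℂ)
    (hN : ∀ i k, i ≠ l → k ≠ l → N i k = M i k - M i l * M l k / M l l)
    {s : ℕ} (A B : Fin s → I)
    (hA : Function.Injective A) (hB : Function.Injective B)
    (hAl : ∀ α, A α ≠ l) (hBl : ∀ β, B β ≠ l) :
    minor N A B = minor M (Fin.cons l A) (Fin.cons l B) / M l l :=
  minor_evolution_general M l hl N hN A B hAl hBl
end

section
/- The M-system is multi-dimensionally consistent in the following sense. Let i, k, l, m be indices with l ≠ m and l, m ∉ {i,k}, and let M^{ik}, M^{il}, M^{im}, M^{lk}, M^{mk}, M^{lm}, M^{ml}, M^{ll}, M^{mm} be complex numbers with M^{ll} ≠ 0, M^{mm} ≠ 0, M^{mm} − M^{ml}M^{lm}/M^{ll} ≠ 0 and M^{ll} − M^{lm}M^{ml}/M^{mm} ≠ 0. Define the shifted values in the direction l by X^{pq}_l = M^{pq} − M^{pl}M^{lq}/M^{ll} for all pairs (p,q) with l ∉ {p,q}, and analogously in the direction m. Then the two iterated updates agree: M^{ik}_l − M^{im}_l·M^{mk}_l/M^{mm}_l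 = M^{ik}_m − M^{il}_m·M^{lk}_m/M^{ll}_m, i.e. (M^{ik}_l)_m = (M^{ik}_m)_l. -/
/-!
One step of the M-system is one step of Gaussian elimination: `M^{ik}_l` is the Schur complement
of the entry `M^{ll}` in the matrix with rows `i, l` and columns `k, l`. Eliminating `l` and then
`m` therefore yields the Schur complement of the block `{l, m}` in the matrix with rows `i, l, m`
and columns `k, l, m`, namely the ratio of its determinant to that of the block. Swapping `l` and
`m` permutes rows and columns of both matrices simultaneously, which leaves this ratio unchanged.
-/

open Matrix

namespace Msystem

variable {K : Type*} [Field K]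

theorem det_fin_three_of (a b c d e f g h i : K) :
    det !![a, b, c; d, e, f; g, h, i]
      = a * e * i - a * f * h - b * d * i + b * f * g + c * d * h - c * e * g :=
  det_fin_three _

/-- `shift Mpq Mpl Mlq Mll` is `M^{pq}_l`. -/
def shift (Mpq Mpl Mlq Mll : K) : K :=
  Mpq - Mpl * Mlq / Mll

theorem mul_shift_eq_det (Mll Mlm Mml Mmm : K) (hll : Mll ≠ 0) :
    Mll * shift Mmm Mml Mlm Mll = det !![Mll, Mlm; Mml, Mmm] := by
  rw [det_fin_two_of, shift]
  field_simp

theorem shift_shift_eq_det_div_det (Mik Mil Mim Mlk Mmk Mlm Mml Mll Mmm : K)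
    (hll : Mll ≠ 0) (hmml : shift Mmm Mml Mlm Mll ≠ 0) :
    shift (shift Mik Mil Mlk Mll) (shift Mim Mil Mlm Mll) (shift Mmk Mml Mlk Mll)
        (shift Mmm Mml Mlm Mll)
      = det !![Mik, Mil, Mim; Mlk, Mll, Mlm; Mmk, Mml, Mmm] / det !![Mll, Mlm; Mml, Mmm] := by
  have hdet : det !![Mll, Mlm; Mml, Mmm] ≠ 0 := by
    rw [← mul_shift_eq_det Mll Mlm Mml Mmm hll]
    exact mul_ne_zero hll hmml
  have hpivot : shift Mmm Mml Mlm Mll = det !![Mll, Mlm; Mml, Mmm] / Mll := by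
    rw [← mul_shift_eq_det Mll Mlm Mml Mmm hll, mul_div_cancel_left₀ _ hll]
  rw [shift, hpivot, det_fin_three_of]
  rw [det_fin_two_of] at hdet ⊢
  simp only [shift]
  field_simp
  ring

end Msystem

open Msystem in
/-- Multi-dimensional consistency of the M-system
`M^{ik}_l = M^{ik} − M^{il}M^{lk}/M^{ll}`: applying the shifts in the two
lattice directions `l` and `m` in either order yields the same value of `M^{ik}`,
i.e. `(M^{ik}_l)_m = (M^{ik}_m)_l`. -/
theorem Msystem_consistency (Mik Mil Mim Mlk Mmk Mlm Mml Mll Mmm : ℂ)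
    (hll : Mll ≠ 0) (hmm : Mmm ≠ 0)
    (hmml : Mmm - Mml * Mlm / Mll ≠ 0)
    (hllm : Mll - Mlm * Mml / Mmm ≠ 0) :
    (Mik - Mil * Mlk / Mll) -
        (Mim - Mil * Mlm / Mll) * (Mmk - Mml * Mlk / Mll) / (Mmm - Mml * Mlm / Mll)
      = (Mik - Mim * Mmk / Mmm) -
        (Mil - Mim * Mml / Mmm) * (Mlk - Mlm * Mmk / Mmm) / (Mll - Mlm * Mml / Mmm) := by
  have elim_l_then_m := shift_shift_eq_det_div_det Mik Mil Mim Mlk Mmk Mlm Mml Mll Mmm hll hmml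
  have elim_m_then_l := shift_shift_eq_det_div_det Mik Mim Mil Mmk Mlk Mml Mlm Mmm Mll hmm hllm
  refine elim_l_then_m.trans (Eq.trans ?_ elim_m_then_l.symm)
  rw [det_fin_three_of, det_fin_three_of, det_fin_two_of, det_fin_two_of]
  ring
end

section
/- Let A be a symmetric 3×3 complex matrix and τ ∈ ℂ. Define τ_i = A_{ii}τ for i ∈ {1,2,3}, τ_{ik} = (A_{ii}A_{kk} − A_{ik}A_{ki})τ for distinct i,k, and τ_{123} = det(A)·τ. Then these quantities satisfy the discrete CKP equation (τ·τ_{123} + τ_1·τ_{23} − τ_2·τ_{13} − τ_3·τ_{12})² − 4(τ_{12}·τ_{13} − τ_1·τ_{123})(τ_2·τ_3 − τ·τ_{23}) = 0. Equivalently, the principal minors of any symmetric 3×3 complex matrix satisfy the Holtz–Sturmfels relation (1·detA + A_{11}m_{23} − A_{22}m_{13} − A_{33}m_{12})² = 4(m_{12}m_{13} − A_{11}detA)(A_{22}A_{33} − m_{23}), where m_{ik} = A_{ii}A_{kk} − A_{ik}². -/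
/-!
Write `a, b, c` for the diagonal of the symmetric matrix, `x = A₁₂, y = A₀₂, z = A₀₁`, and
`d = yz − ax`. Expanding the determinant, the bracket of the dCKP equation collapses to `2xd`,
while its two factors are the perfect squares `d²` and `x²`; so the equation reads
`(2xd)² − 4d²x² = 0`. Scaling every τ-variable by `τ` multiplies the left-hand side by `τ⁴`.
-/

namespace Matrix

variable {R : Type*} [CommRing R]

def dCKP (τ τ₁ τ₂ τ₃ τ₁₂ τ₁₃ τ₂₃ τ₁₂₃ : R) : R :=
  (τ * τ₁₂₃ + τ₁ * τ₂₃ - τ₂ * τ₁₃ - τ₃ * τ₁₂) ^ 2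
    - 4 * (τ₁₂ * τ₁₃ - τ₁ * τ₁₂₃) * (τ₂ * τ₃ - τ * τ₂₃)

theorem IsSymm.det_fin_three {A : Matrix (Fin 3) (Fin 3) R} (hA : A.IsSymm) :
    A.det = A 0 0 * A 1 1 * A 2 2 + 2 * A 0 1 * A 0 2 * A 1 2
      - A 0 0 * A 1 2 ^ 2 - A 1 1 * A 0 2 ^ 2 - A 2 2 * A 0 1 ^ 2 := by
  rw [Matrix.det_fin_three, hA.apply 0 1, hA.apply 0 2, hA.apply 1 2]
  ring

theorem IsSymm.dCKP_principalMinors {A : Matrix (Fin 3) (Fin 3) R} (hA : A.IsSymm) :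
    dCKP 1 (A 0 0) (A 1 1) (A 2 2)
      (A 0 0 * A 1 1 - A 0 1 ^ 2) (A 0 0 * A 2 2 - A 0 2 ^ 2) (A 1 1 * A 2 2 - A 1 2 ^ 2)
      A.det = 0 := by
  have bracket : 1 * A.det + A 0 0 * (A 1 1 * A 2 2 - A 1 2 ^ 2)
      - A 1 1 * (A 0 0 * A 2 2 - A 0 2 ^ 2) - A 2 2 * (A 0 0 * A 1 1 - A 0 1 ^ 2)
      = 2 * A 1 2 * (A 0 1 * A 0 2 - A 0 0 * A 1 2) := by
    rw [hA.det_fin_three]; ring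
  have first_factor : (A 0 0 * A 1 1 - A 0 1 ^ 2) * (A 0 0 * A 2 2 - A 0 2 ^ 2) - A 0 0 * A.det
      = (A 0 1 * A 0 2 - A 0 0 * A 1 2) ^ 2 := by
    rw [hA.det_fin_three]; ring
  have second_factor : A 1 1 * A 2 2 - 1 * (A 1 1 * A 2 2 - A 1 2 ^ 2) = A 1 2 ^ 2 := by ring
  rw [dCKP, bracket, first_factor, second_factor]
  ring

end Matrix

/-- The principal minors of a symmetric 3×3 complex matrix satisfy the discrete CKP
equation `(ττ₁₂₃ + τ₁τ₂₃ − τ₂τ₁₃ − τ₃τ₁₂)² − 4(τ₁₂τ₁₃ − τ₁τ₁₂₃)(τ₂τ₃ − ττ₂₃) = 0`,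
where `τᵢ = Aᵢᵢτ`, `τᵢₖ = (AᵢᵢAₖₖ − AᵢₖAₖᵢ)τ`, `τ₁₂₃ = det(A)·τ`; equivalently,
the Holtz–Sturmfels relation for the principal minors of `A` holds. -/
theorem symmetric_principal_minors_dCKP (A : Matrix (Fin 3) (Fin 3) ℂ)
    (hA : A.IsSymm) (τ : ℂ) :
    (τ * (A.det * τ)
          + (A 0 0 * τ) * ((A 1 1 * A 2 2 - A 1 2 * A 2 1) * τ)
          - (A 1 1 * τ) * ((A 0 0 * A 2 2 - A 0 2 * A 2 0) * τ)
          - (A 2 2 * τ) * ((A 0 0 * A 1 1 - A 0 1 * A 1 0) * τ)) ^ 2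
        - 4 * (((A 0 0 * A 1 1 - A 0 1 * A 1 0) * τ) * ((A 0 0 * A 2 2 - A 0 2 * A 2 0) * τ)
              - (A 0 0 * τ) * (A.det * τ))
            * ((A 1 1 * τ) * (A 2 2 * τ) - τ * ((A 1 1 * A 2 2 - A 1 2 * A 2 1) * τ))
        = 0
      ∧ (1 * A.det
            + A 0 0 * (A 1 1 * A 2 2 - A 1 2 ^ 2)
            - A 1 1 * (A 0 0 * A 2 2 - A 0 2 ^ 2)
            - A 2 2 * (A 0 0 * A 1 1 - A 0 1 ^ 2)) ^ 2
        = 4 * ((A 0 0 * A 1 1 - A 0 1 ^ 2) * (A 0 0 * A 2 2 - A 0 2 ^ 2) - A 0 0 * A.det)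
            * (A 1 1 * A 2 2 - (A 1 1 * A 2 2 - A 1 2 ^ 2)) := by
  have h := hA.dCKP_principalMinors
  rw [Matrix.dCKP] at h
  refine ⟨?_, by linear_combination h⟩
  rw [hA.apply 0 1, hA.apply 0 2, hA.apply 1 2]
  linear_combination τ ^ 4 * h
end

section
/- Let h, h_1, h_2, h_3, h_{23}, h^x, h^x_1, h^y, h^z be complex numbers with h ≠ 0, h_1 ≠ 0 and h^x ≠ 0. Define M^{11} = h_1/h, M^{23} = −h^x/h, M^{31} = −h^y/h, M^{12} = −h^z/h, M^{32} = −(h_2h_3 + h·h_{23})/(h·h^x), and M^{23}_1 = −h^x_1/h_1. Then the hexahedron recurrence relation h^x_1·h^x·h = h^x·h^y·h^z + h_1·h_2·h_3 + h·h_1·h_{23} holds if and only if M^{23}_1 = M^{32} − M^{31}M^{12}/M^{11}. -/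
/-- The first hexahedron recurrence relation
`h^x_1·h^x·h = h^xh^yh^z + h₁h₂h₃ + h·h₁·h₂₃` is equivalent to the M-system
equation `M^{23}_1 = M^{32} − M^{31}M^{12}/M^{11}` under the change of variables
`M^{11} = h₁/h`, `M^{23} = −h^x/h`, `M^{31} = −h^y/h`, `M^{12} = −h^z/h`,
`M^{32} = −(h₂h₃ + h·h₂₃)/(h·h^x)`, `M^{23}_1 = −h^x_1/h₁`. -/
theorem hexahedron_first_relation_iff_Msystem
    (h h1 h2 h3 h23 hx hx1 hy hz : ℂ)
    (hh : h ≠ 0) (hh1 : h1 ≠ 0) (hhx : hx ≠ 0) :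
    hx1 * hx * h = hx * hy * hz + h1 * h2 * h3 + h * h1 * h23 ↔
      -hx1 / h1 =
        -((h2 * h3 + h * h23) / (h * hx)) - (-hy / h) * (-hz / h) / (h1 / h) := by
  -- Multiplying by `-h·h₁·hˣ` turns the two sides of the M-system equation into those of the recurrence.
  have hscale : -(h * h1 * hx) ≠ 0 := neg_ne_zero.mpr (mul_ne_zero (mul_ne_zero hh hh1) hhx)
  have clear_lhs : -(h * h1 * hx) * (-hx1 / h1) = hx1 * hx * h := by
    field_simp
  have clear_rhs : -(h * h1 * hx) *
      (-((h2 * h3 + h * h23) / (h * hx)) - (-hy / h) * (-hz / h) / (h1 / h)) =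
        hx * hy * hz + h1 * h2 * h3 + h * h1 * h23 := by
    field_simp
    ring
  rw [← mul_right_inj' hscale (b := -hx1 / h1), clear_lhs, clear_rhs]
end

section
/- Let h, h_1, h_2, h_3, h_{12}, h_{13}, h_{23}, h_{123}, h^x, h^y, h^z be complex numbers with h ≠ 0, h^x ≠ 0, h^y ≠ 0, h^z ≠ 0. Define the 3×3 matrix M with entries M^{11} = h_1/h, M^{22} = h_2/h, M^{33} = h_3/h, M^{23} = −h^x/h, M^{31} = −h^y/h, M^{12} = −h^z/h, M^{32} = −(h_2h_3 + h·h_{23})/(h·h^x), M^{13} = −(h_1h_3 + h·h_{13})/(h·h^y), M^{21} = −(h_1h_2 + h·h_{12})/(h·h^z). Then the fourth hexahedron recurrence relation h_{123}·h²·h^xh^yh^z = (h^xh^yh^z)² + h^xh^yh^z(2h_1h_2h_3 + h·h_1h_{23} + h·h_2h_{13} + h·h_3h_{12}) + (h_1h_2 + h·h_{12})(h_1h_3 + h·h_{13})(h_2h_3 + h·h_{23}) holds if and only if h_{123} = −det(M)·h. -/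
/-!
Factoring `h⁻¹` out of `M` gives `det M = h⁻³ det N`, where `N` has diagonal `hᵢ` and
off-diagonal entries `-h^x, -h^y, -h^z, -Δ^x/h^x, -Δ^y/h^y, -Δ^z/h^z`. In the expansion of
`det N` the two cyclic products are `-h^xh^yh^z` and `-Δ^xΔ^yΔ^z/(h^xh^yh^z)`, so
`-det N · h^xh^yh^z` is exactly the right-hand side of the fourth relation, which is
therefore `h₁₂₃ h² = -det N`.
-/

theorem neg_det_cyclic_mul_prod {K : Type*} [Field K] (d₁ d₂ d₃ x y z p q r : K)
    (hx : x ≠ 0) (hy : y ≠ 0) (hz : z ≠ 0) :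
    -Matrix.det !![d₁, -z, -q / y; -r / z, d₂, -x; -y, -p / x, d₃] * (x * y * z) =
      (x * y * z) ^ 2 + x * y * z * (d₁ * p + d₂ * q + d₃ * r - d₁ * d₂ * d₃) + p * q * r := by
  rw [Matrix.det_fin_three]
  simp only [Matrix.of_apply, Matrix.cons_val', Matrix.cons_val_zero, Matrix.cons_val_one,
    Matrix.cons_val_two, Matrix.empty_val', Matrix.cons_val_fin_one, Matrix.head_cons,
    Matrix.tail_cons, Matrix.head_fin_const]
  field_simp
  ring

/-- The fourth hexahedron recurrence relation is equivalent to
`h₁₂₃ = −det(M)·h`, where `M` is the 3×3 matrix obtained from the hexahedron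
data by the change of variables `M^{ii} = hᵢ/h`, `M^{23} = −h^x/h`,
`M^{31} = −h^y/h`, `M^{12} = −h^z/h`, `M^{32} = −Δ^x/(hh^x)`,
`M^{13} = −Δ^y/(hh^y)`, `M^{21} = −Δ^z/(hh^z)`. -/
theorem hexahedron_fourth_relation_iff_det
    (h h1 h2 h3 h12 h13 h23 h123 hx hy hz : ℂ)
    (hh : h ≠ 0) (hhx : hx ≠ 0) (hhy : hy ≠ 0) (hhz : hz ≠ 0) :
    h123 * h ^ 2 * (hx * hy * hz) =
        (hx * hy * hz) ^ 2
          + hx * hy * hz *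
              (2 * h1 * h2 * h3 + h * h1 * h23 + h * h2 * h13 + h * h3 * h12)
          + (h1 * h2 + h * h12) * (h1 * h3 + h * h13) * (h2 * h3 + h * h23) ↔
      h123 =
        -Matrix.det
            !![h1 / h, -hz / h, -(h1 * h3 + h * h13) / (h * hy);
               -(h1 * h2 + h * h12) / (h * hz), h2 / h, -hx / h;
               -hy / h, -(h2 * h3 + h * h23) / (h * hx), h3 / h] * h := by
  set Δx := h2 * h3 + h * h23
  set Δy := h1 * h3 + h * h13
  set Δz := h1 * h2 + h * h12
  set N := !![h1, -hz, -Δy / hy; -Δz / hz, h2, -hx; -hy, -Δx / hx, h3]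
  have hM : !![h1 / h, -hz / h, -Δy / (h * hy); -Δz / (h * hz), h2 / h, -hx / h;
      -hy / h, -Δx / (h * hx), h3 / h] = h⁻¹ • N := by
    ext i j
    fin_cases i <;> fin_cases j <;> simp [N] <;> ring
  have hrel : (hx * hy * hz) ^ 2
      + hx * hy * hz * (2 * h1 * h2 * h3 + h * h1 * h23 + h * h2 * h13 + h * h3 * h12)
      + Δz * Δy * Δx = -N.det * (hx * hy * hz) := by
    rw [neg_det_cyclic_mul_prod h1 h2 h3 hx hy hz Δx Δy Δz hhx hhy hhz]
    ring
  have hscale : -(h⁻¹ ^ 3 * N.det) * h = -N.det / h ^ 2 := by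
    field_simp
  rw [hM, Matrix.det_smul, Fintype.card_fin, hrel, hscale,
    mul_left_inj' (by simp [hhx, hhy, hhz]), eq_div_iff (pow_ne_zero 2 hh)]
end

section
/- The quantities Ξ^{lm} = 1 − N^{lm}N^{ml} are conservation laws of the discrete Darboux system. Precisely, let l, m, p be distinct indices and N^{lm}, N^{ml}, N^{lp}, N^{pl}, N^{mp}, N^{pm} complex numbers with 1 − N^{lm}N^{ml} ≠ 0, 1 − N^{lp}N^{pl} ≠ 0 and 1 − N^{mp}N^{pm} ≠ 0. Define the shifted values by the discrete Darboux system: N^{lp}_m = (N^{lp} + N^{lm}N^{mp})/(1 − N^{lm}N^{ml}), N^{pl}_m = (N^{pl} + N^{pm}N^{ml})/(1 − N^{pm}N^{mp}), N^{lm}_p = (N^{lm} + N^{lp}N^{pm})/(1 − N^{lp}N^{pl}), N^{ml}_p = (N^{ml} + N^{mp}N^{pl})/(1 − N^{mp}N^{pm}). Then (1 − N^{lm}N^{ml})·(1 − N^{lp}_m N^{pl}_m) = (1 − N^{lp}N^{pl})·(1 − N^{lm}_p N^{ml}_p). -/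
/-!
Both sides, multiplied by `Ξ^{mp} = 1 − N^{mp}N^{pm}`, equal the principal minor
`det (1 − N)` of the matrix `N` on the indices `l, m, p`; that minor is invariant under
exchanging `m` and `p` (conjugation by a transposition), and the two sides are exchanged by it.
-/

theorem mul_one_sub_div_mul_div_mul {K : Type*} [Field K] {a c : K} (ha : a ≠ 0) (hc : c ≠ 0)
    (x y : K) :
    a * (1 - x / a * (y / c)) * c = a * c - x * y := by
  field_simp

namespace Darboux

variable {K : Type*} [Field K]

def minor (Nlm Nml Nlp Npl Nmp Npm : K) : K :=
  !![1, -Nlm, -Nlp; -Nml, 1, -Nmp; -Npl, -Npm, 1].det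

theorem minor_eq (Nlm Nml Nlp Npl Nmp Npm : K) :
    minor Nlm Nml Nlp Npl Nmp Npm =
      1 - Nlm * Nml - Nlp * Npl - Nmp * Npm - Nlm * Nmp * Npl - Nlp * Npm * Nml := by
  simp only [minor, Matrix.det_fin_three, Matrix.of_apply, Matrix.cons_val', Matrix.cons_val,
    Matrix.cons_val_zero, Matrix.cons_val_one, Matrix.empty_val', Matrix.cons_val_fin_one]
  ring

theorem minor_swap (Nlm Nml Nlp Npl Nmp Npm : K) :
    minor Nlm Nml Nlp Npl Nmp Npm = minor Nlp Npl Nlm Nml Npm Nmp := by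
  rw [minor_eq, minor_eq]
  ring

theorem mul_one_sub_shift_mul_eq_minor {Nlm Nml Nlp Npl Nmp Npm : K}
    (hlm : 1 - Nlm * Nml ≠ 0) (hmp : 1 - Npm * Nmp ≠ 0) :
    (1 - Nlm * Nml) *
        (1 - ((Nlp + Nlm * Nmp) / (1 - Nlm * Nml)) * ((Npl + Npm * Nml) / (1 - Npm * Nmp))) *
        (1 - Npm * Nmp) = minor Nlm Nml Nlp Npl Nmp Npm := by
  rw [mul_one_sub_div_mul_div_mul hlm hmp, minor_eq]
  ring

end Darboux

/-- Conservation law `Ξ^{lm}·Ξ^{lp}_m = Ξ^{lp}·Ξ^{lm}_p` with `Ξ^{lm} = 1 − N^{lm}N^{ml}`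
for the discrete Darboux system, where the shifted values are defined by
`N^{lp}_m = (N^{lp} + N^{lm}N^{mp})/(1 − N^{lm}N^{ml})`,
`N^{pl}_m = (N^{pl} + N^{pm}N^{ml})/(1 − N^{pm}N^{mp})`,
`N^{lm}_p = (N^{lm} + N^{lp}N^{pm})/(1 − N^{lp}N^{pl})`,
`N^{ml}_p = (N^{ml} + N^{mp}N^{pl})/(1 − N^{mp}N^{pm})`. -/
theorem darboux_conservation_law (Nlm Nml Nlp Npl Nmp Npm : ℂ)
    (h1 : 1 - Nlm * Nml ≠ 0) (h2 : 1 - Nlp * Npl ≠ 0) (h3 : 1 - Nmp * Npm ≠ 0) :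
    (1 - Nlm * Nml) *
        (1 - ((Nlp + Nlm * Nmp) / (1 - Nlm * Nml)) *
              ((Npl + Npm * Nml) / (1 - Npm * Nmp)))
      = (1 - Nlp * Npl) *
          (1 - ((Nlm + Nlp * Npm) / (1 - Nlp * Npl)) *
                ((Nml + Nmp * Npl) / (1 - Nmp * Npm))) := by
  have h3' : 1 - Npm * Nmp ≠ 0 := by rwa [mul_comm]
  calc _ = Darboux.minor Nlm Nml Nlp Npl Nmp Npm / (1 - Npm * Nmp) :=
        eq_div_of_mul_eq h3' (Darboux.mul_one_sub_shift_mul_eq_minor h1 h3')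
    _ = Darboux.minor Nlp Npl Nlm Nml Npm Nmp / (1 - Nmp * Npm) := by
      rw [Darboux.minor_swap, mul_comm Npm]
    _ = _ := (eq_div_of_mul_eq h3 (Darboux.mul_one_sub_shift_mul_eq_minor h2 h3)).symm
end

section
/- The M-system reduces to the discrete Darboux system under the parametrisation N^{lm} = −M^{lm}/M^{ll}. Precisely, let l, m, p be distinct indices and M^{ab} (a,b ∈ {l,m,p}) complex numbers with M^{ll} ≠ 0, M^{mm} ≠ 0, M^{pp} ≠ 0 and M^{ll}M^{pp} − M^{lp}M^{pl} ≠ 0. Define N^{ab} = −M^{ab}/M^{aa} for a ≠ b, and define the shifted values by the M-system: M^{lm}_p = M^{lm} − M^{lp}M^{pm}/M^{pp}, M^{ll}_p = M^{ll} − M^{lp}M^{pl}/M^{pp}. Then (i) N^{lm}_p := −M^{lm}_p/M^{ll}_p satisfies the discrete Darboux equation N^{lm}_p = (N^{lm} + N^{lp}N^{pm})/(1 − N^{lp}N^{pl}), and (ii) M^{ll}_m = (1 − N^{lm}N^{ml})·M^{ll} whenever M^{mm} ≠ 0, where M^{ll}_m = M^{ll} − M^{lm}M^{ml}/M^{mm}.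 -/
/-!
Write `N^{ab} = -M^{ab}/M^{aa}`. Both shifted quantities of the M-system become `M^{ll}` times an
expression in the `N`'s: `M^{ll}_p = (1 - N^{lp}N^{pl}) M^{ll}` and
`-M^{lm}_p = (N^{lm} + N^{lp}N^{pm}) M^{ll}`. Their quotient is the Darboux equation once
`M^{ll}` cancels.
-/

section
variable {K : Type*} [Field K]

theorem mSystem_diag_shift_eq {Maa Mbb Mab Mba : K} (haa : Maa ≠ 0) :
    Maa - Mab * Mba / Mbb = (1 - (-(Mab / Maa)) * (-(Mba / Mbb))) * Maa := by
  field_simp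

theorem mSystem_offdiag_shift_eq {Maa Mpp Mab Map Mpb : K} (haa : Maa ≠ 0) :
    -(Mab - Map * Mpb / Mpp) = ((-(Mab / Maa)) + (-(Map / Maa)) * (-(Mpb / Mpp))) * Maa := by
  field_simp
  ring

end

theorem Msystem_to_darboux_general (Mll Mmm Mpp Mlm Mml Mlp Mpl Mpm : ℂ)
    (hll : Mll ≠ 0) :
    (-(Mlm - Mlp * Mpm / Mpp) / (Mll - Mlp * Mpl / Mpp)
        = ((-(Mlm / Mll)) + (-(Mlp / Mll)) * (-(Mpm / Mpp)))
            / (1 - (-(Mlp / Mll)) * (-(Mpl / Mpp))))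
      ∧ (Mll - Mlm * Mml / Mmm
          = (1 - (-(Mlm / Mll)) * (-(Mml / Mmm))) * Mll) := by
  refine ⟨?_, mSystem_diag_shift_eq hll⟩
  rw [mSystem_offdiag_shift_eq hll, mSystem_diag_shift_eq hll, mul_div_mul_right _ _ hll]

/-- The M-system reduces to the discrete Darboux system under the parametrisation
`N^{lm} = −M^{lm}/M^{ll}`: (i) the shifted quantity `N^{lm}_p = −M^{lm}_p/M^{ll}_p`
satisfies the discrete Darboux equation, and (ii) the potentials `M^{ll}` satisfy
`M^{ll}_m = (1 − N^{lm}N^{ml})·M^{ll}`. -/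
theorem Msystem_to_darboux (Mll Mmm Mpp Mlm Mml Mlp Mpl Mmp Mpm : ℂ)
    (hll : Mll ≠ 0) (hmm : Mmm ≠ 0) (hpp : Mpp ≠ 0)
    (hden : Mll * Mpp - Mlp * Mpl ≠ 0) :
    (-(Mlm - Mlp * Mpm / Mpp) / (Mll - Mlp * Mpl / Mpp)
        = ((-(Mlm / Mll)) + (-(Mlp / Mll)) * (-(Mpm / Mpp)))
            / (1 - (-(Mlp / Mll)) * (-(Mpl / Mpp))))
      ∧ (Mll - Mlm * Mml / Mmm
          = (1 - (-(Mlm / Mll)) * (-(Mml / Mmm))) * Mll) :=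
  Msystem_to_darboux_general Mll Mmm Mpp Mlm Mml Mlp Mpl Mpm hll
end

section
/- Let a = (α⁰,α¹,α²,α³) and b = (β⁰,β¹,β²,β³) be vectors in ℂ⁴ with all components nonzero and γ⁰² = α⁰β² − α²β⁰ ≠ 0, and let x¹ = (0,0,1,0), x² = (1,0,0,0), x³ = a, x⁴ = (0,0,0,1), x⁵ = (0,1,0,0), x⁶ = b. Let B be the symmetric matrix with B₀₂ = B₂₀ = γ¹³ = α¹β³ − α³β¹, B₁₃ = B₃₁ = γ⁰², B₀₀ = −(β²/β⁰)γ¹³, B₁₁ = −(α³/α¹)γ⁰², B₂₂ = −(α⁰/α²)γ¹³, B₃₃ = −(β¹/β³)γ⁰², other entries zero. For μ¹, μ² ∈ ℂ set μ³ = (β⁰μ¹ − β²μ²)/γ⁰², μ⁴ = (γ⁰³μ¹ − γ²³μ²)/γ⁰², μ⁵ = (γ⁰¹μ¹ + γ¹²μ²)/γ⁰², μ⁶ = −(α⁰μ¹ − α²μ²)/γ⁰², where γ^{μν} = α^μβ^ν − α^νβ^μ, and define x¹² = μ¹x¹ + μ²x², x³⁴ = μ³x³ + μ⁴x⁴, x⁵⁶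 = μ⁵x⁵ + μ⁶x⁶, x²³ = μ²x² + μ³x³, x⁴⁵ = μ⁴x⁴ + μ⁵x⁵, x⁶¹ = μ⁶x⁶ + μ¹x¹. Then: (i) x¹² + x³⁴ + x⁵⁶ = 0 (so x¹², x³⁴, x⁵⁶ are collinear points of a line l, and likewise x²³, x⁴⁵, x⁶¹ lie on a line l′); (ii) (x¹²)ᵀ B x²³ = 0 (so l′ is the image of l under the polarity B); and (iii) det[x², x³⁴, x⁵, x⁶¹] = 0 (the coplanarity property holds), so the eight lines form an elementary cube of a fundamental line complex in ℂP³. -/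
/-!
Both triples `x¹², x³⁴, x⁵⁶` and `x²³, x⁴⁵, x⁶¹` sum to `∑ μⁱxⁱ`, which vanishes: coordinates
`0` and `2` are Cramer's rule for `μ³, μ⁶`, coordinates `1` and `3` define `μ⁵, μ⁴`. The same
relation gives `x³⁴ + x⁶¹ = -(μ²x² + μ⁵x⁵)`, a linear dependence between the rows of the
determinant. For the polarity, `x¹` and `x³` are conjugate with respect to `B`, and the pairing of
`x¹²` with `x²³` is a multiple of `β⁰μ¹ − β²μ² − γ⁰²μ³`.
-/

open Matrix

/-- The symmetric matrix `B` of the polarity associated with the hexagon with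
vertices `x¹ = (0,0,1,0)`, `x² = (1,0,0,0)`, `x³ = a`, `x⁴ = (0,0,0,1)`,
`x⁵ = (0,1,0,0)`, `x⁶ = b`, where `γ⁰² = α⁰β² − α²β⁰` and `γ¹³ = α¹β³ − α³β¹`. -/
noncomputable def hexB (α0 α1 α2 α3 β0 β1 β2 β3 : ℂ) : Matrix (Fin 4) (Fin 4) ℂ :=
  !![-(β2 / β0) * (α1 * β3 - α3 * β1), 0, α1 * β3 - α3 * β1, 0;
     0, -(α3 / α1) * (α0 * β2 - α2 * β0), 0, α0 * β2 - α2 * β0;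
     α1 * β3 - α3 * β1, 0, -(α0 / α2) * (α1 * β3 - α3 * β1), 0;
     0, α0 * β2 - α2 * β0, 0, -(β1 / β3) * (α0 * β2 - α2 * β0)]

/-- The coefficients `μ³, μ⁴, μ⁵, μ⁶` determined by `μ¹, μ²`,
with `γ^{μν} = α^μβ^ν − α^νβ^μ`. -/
noncomputable def μ3 (α0 α1 α2 α3 β0 β1 β2 β3 μ1 μ2 : ℂ) : ℂ :=
  (β0 * μ1 - β2 * μ2) / (α0 * β2 - α2 * β0)

noncomputable def μ4 (α0 α1 α2 α3 β0 β1 β2 β3 μ1 μ2 : ℂ) : ℂ :=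
  ((α0 * β3 - α3 * β0) * μ1 - (α2 * β3 - α3 * β2) * μ2) / (α0 * β2 - α2 * β0)

noncomputable def μ5 (α0 α1 α2 α3 β0 β1 β2 β3 μ1 μ2 : ℂ) : ℂ :=
  ((α0 * β1 - α1 * β0) * μ1 + (α1 * β2 - α2 * β1) * μ2) / (α0 * β2 - α2 * β0)

noncomputable def μ6 (α0 α1 α2 α3 β0 β1 β2 β3 μ1 μ2 : ℂ) : ℂ :=
  -(α0 * μ1 - α2 * μ2) / (α0 * β2 - α2 * β0)

theorem det_eq_zero_of_smul_add_add_smul_add_eq_zero {R : Type*} [CommRing R] [IsDomain R]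
    (v₀ v₁ v₂ v₃ : Fin 4 → R) (a b : R) (h : a • v₀ + v₁ + b • v₂ + v₃ = 0) :
    (Matrix.of ![v₀, v₁, v₂, v₃]).det = 0 := by
  refine exists_vecMul_eq_zero_iff.mp ⟨![a, 1, b, 1], fun h₀ => one_ne_zero (congrFun h₀ 1), ?_⟩
  simp only [vecMul_eq_sum, Fin.sum_univ_four, cons_val_zero, cons_val_one, cons_val, one_smul]
  exact h

section Hexagon

variable {α0 α1 α2 α3 β0 β1 β2 β3 : ℂ} (μ1 μ2 : ℂ)

theorem hexagon_transversal_sum_eq_zero (hγ : α0 * β2 - α2 * β0 ≠ 0) :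
    (μ1 • ![0, 0, 1, 0] + μ2 • ![1, 0, 0, 0])
      + (μ3 α0 α1 α2 α3 β0 β1 β2 β3 μ1 μ2 • ![α0, α1, α2, α3]
        + μ4 α0 α1 α2 α3 β0 β1 β2 β3 μ1 μ2 • ![0, 0, 0, 1])
      + (μ5 α0 α1 α2 α3 β0 β1 β2 β3 μ1 μ2 • ![0, 1, 0, 0]
        + μ6 α0 α1 α2 α3 β0 β1 β2 β3 μ1 μ2 • ![β0, β1, β2, β3]) = (0 : Fin 4 → ℂ) := by
  have hγγ := mul_inv_cancel₀ hγ
  ext i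
  fin_cases i <;>
    simp only [μ3, μ4, μ5, μ6, div_eq_mul_inv, Pi.add_apply, Pi.smul_apply, smul_eq_mul,
      Pi.zero_apply, Fin.isValue, Fin.zero_eta, Fin.mk_one, Fin.reduceFinMk, cons_val_zero,
      cons_val_one, cons_val]
  · linear_combination (-μ2) * hγγ
  · ring
  · linear_combination (-μ1) * hγγ
  · ring

theorem dotProduct_hexB_mulVec_eq_zero (hα2 : α2 ≠ 0) (hβ0 : β0 ≠ 0)
    (hγ : α0 * β2 - α2 * β0 ≠ 0) :
    (μ1 • ![0, 0, 1, 0] + μ2 • ![1, 0, 0, 0]) ⬝ᵥ hexB α0 α1 α2 α3 β0 β1 β2 β3 *ᵥ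
      (μ2 • ![1, 0, 0, 0] + μ3 α0 α1 α2 α3 β0 β1 β2 β3 μ1 μ2 • ![α0, α1, α2, α3]) = 0 := by
  set m3 := μ3 α0 α1 α2 α3 β0 β1 β2 β3 μ1 μ2
  have hm3 : (α0 * β2 - α2 * β0) * m3 = β0 * μ1 - β2 * μ2 := mul_div_cancel₀ _ hγ
  calc _ = (α1 * β3 - α3 * β1) * μ2 / β0 * (β0 * μ1 - β2 * μ2 - (α0 * β2 - α2 * β0) * m3) := by
        simp only [hexB, dotProduct, mulVec, Fin.sum_univ_four, Pi.add_apply, Pi.smul_apply,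
          smul_eq_mul, of_apply, cons_val', cons_val_fin_one, cons_val_zero, cons_val_one, cons_val]
        field_simp
        ring
    _ = 0 := by rw [hm3, sub_self, mul_zero]

end Hexagon

theorem hexagon_cube_fundamental_general (α0 α1 α2 α3 β0 β1 β2 β3 μ1 μ2 : ℂ)
    (hα2 : α2 ≠ 0)
    (hβ0 : β0 ≠ 0)
    (hγ02 : α0 * β2 - α2 * β0 ≠ 0) :
    let x1 : Fin 4 → ℂ := ![0, 0, 1, 0]
    let x2 : Fin 4 → ℂ := ![1, 0, 0, 0]
    let x3 : Fin 4 → ℂ := ![α0, α1, α2, α3]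
    let x4 : Fin 4 → ℂ := ![0, 0, 0, 1]
    let x5 : Fin 4 → ℂ := ![0, 1, 0, 0]
    let x6 : Fin 4 → ℂ := ![β0, β1, β2, β3]
    let m3 := μ3 α0 α1 α2 α3 β0 β1 β2 β3 μ1 μ2
    let m4 := μ4 α0 α1 α2 α3 β0 β1 β2 β3 μ1 μ2
    let m5 := μ5 α0 α1 α2 α3 β0 β1 β2 β3 μ1 μ2
    let m6 := μ6 α0 α1 α2 α3 β0 β1 β2 β3 μ1 μ2
    let x12 := μ1 • x1 + μ2 • x2
    let x34 := m3 • x3 + m4 • x4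
    let x56 := m5 • x5 + m6 • x6
    let x23 := μ2 • x2 + m3 • x3
    let x45 := m4 • x4 + m5 • x5
    let x61 := m6 • x6 + μ1 • x1
    (x12 + x34 + x56 = 0 ∧ x23 + x45 + x61 = 0)
      ∧ x12 ⬝ᵥ (hexB α0 α1 α2 α3 β0 β1 β2 β3).mulVec x23 = 0
      ∧ Matrix.det (Matrix.of ![x2, x34, x5, x61]) = 0 := by
  intro x1 x2 x3 x4 x5 x6 m3 m4 m5 m6 x12 x34 x56 x23 x45 x61
  have h123 : x12 + x34 + x56 = 0 := hexagon_transversal_sum_eq_zero μ1 μ2 hγ02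
  have h456 : x23 + x45 + x61 = 0 := by
    rw [← h123]
    simp only [x12, x34, x56, x23, x45, x61]
    abel
  have hrows : μ2 • x2 + x34 + m5 • x5 + x61 = 0 := by
    rw [← h123]
    simp only [x12, x56, x61]
    abel
  exact ⟨⟨h123, h456⟩, dotProduct_hexB_mulVec_eq_zero μ1 μ2 hα2 hβ0 hγ02,
    det_eq_zero_of_smul_add_add_smul_add_eq_zero _ _ _ _ μ2 m5 hrows⟩

/-- An elementary cube of a fundamental line complex from a hexagon and a polarity:
with `x¹² = μ¹x¹ + μ²x²` etc., (i) `x¹² + x³⁴ + x⁵⁶ = 0` and `x²³ + x⁴⁵ + x⁶¹ = 0`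
(the two triples of points are collinear, defining the lines `l` and `l′`);
(ii) `(x¹²)ᵀ B x²³ = 0` (so `l′` is the image of `l` under the polarity `B`); and
(iii) `det[x², x³⁴, x⁵, x⁶¹] = 0` (the coplanarity property),
so the eight lines form an elementary cube of a fundamental line complex in `ℂP³`. -/
theorem hexagon_cube_fundamental (α0 α1 α2 α3 β0 β1 β2 β3 μ1 μ2 : ℂ)
    (hα0 : α0 ≠ 0) (hα1 : α1 ≠ 0) (hα2 : α2 ≠ 0) (hα3 : α3 ≠ 0)
    (hβ0 : β0 ≠ 0) (hβ1 : β1 ≠ 0) (hβ2 : β2 ≠ 0) (hβ3 : β3 ≠ 0)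
    (hγ02 : α0 * β2 - α2 * β0 ≠ 0) :
    let x1 : Fin 4 → ℂ := ![0, 0, 1, 0]
    let x2 : Fin 4 → ℂ := ![1, 0, 0, 0]
    let x3 : Fin 4 → ℂ := ![α0, α1, α2, α3]
    let x4 : Fin 4 → ℂ := ![0, 0, 0, 1]
    let x5 : Fin 4 → ℂ := ![0, 1, 0, 0]
    let x6 : Fin 4 → ℂ := ![β0, β1, β2, β3]
    let m3 := μ3 α0 α1 α2 α3 β0 β1 β2 β3 μ1 μ2
    let m4 := μ4 α0 α1 α2 α3 β0 β1 β2 β3 μ1 μ2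
    let m5 := μ5 α0 α1 α2 α3 β0 β1 β2 β3 μ1 μ2
    let m6 := μ6 α0 α1 α2 α3 β0 β1 β2 β3 μ1 μ2
    let x12 := μ1 • x1 + μ2 • x2
    let x34 := m3 • x3 + m4 • x4
    let x56 := m5 • x5 + m6 • x6
    let x23 := μ2 • x2 + m3 • x3
    let x45 := m4 • x4 + m5 • x5
    let x61 := m6 • x6 + μ1 • x1
    (x12 + x34 + x56 = 0 ∧ x23 + x45 + x61 = 0)
      ∧ x12 ⬝ᵥ (hexB α0 α1 α2 α3 β0 β1 β2 β3).mulVec x23 = 0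
      ∧ Matrix.det (Matrix.of ![x2, x34, x5, x61]) = 0 :=
  hexagon_cube_fundamental_general α0 α1 α2 α3 β0 β1 β2 β3 μ1 μ2 hα2 hβ0 hγ02
end

section
/- Binary Darboux transformation: let u, φ^k, φ^l, ψ^i, ψ^l, M^{lk}, M^{il}, M^{ll} : ℝ² → ℂ be smooth functions of (x,t) such that φ^k and φ^l satisfy φ_t = φ_xx + uφ, ψ^i and ψ^l satisfy −ψ_t = ψ_xx + uψ, and M^{lk}_x = ψ^lφ^k, M^{lk}_t = ψ^lφ^k_x − ψ^l_xφ^k, M^{il}_x = ψ^iφ^l, M^{il}_t = ψ^iφ^l_x − ψ^i_xφ^l, M^{ll}_x = ψ^lφ^l, M^{ll}_t = ψ^lφ^l_x − ψ^l_xφ^l, with M^{ll} nowhere zero. Define u_l = u + 2∂_x(M^{ll}_x/M^{ll}), φ^k_l = φ^k − φ^l·M^{lk}/M^{ll} and ψ^i_l = ψ^i − ψ^l·M^{il}/M^{ll}. Then φ^k_l satisfies the transformed Schrödinger equation (φ^k_l)_t = (φ^k_l)_xx + u_l·φ^k_l and ψ^i_l satisfies the transformed adjoint equation −(ψ^i_l)_t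 = (ψ^i_l)_xx + u_l·ψ^i_l. -/
/-- The partial derivative with respect to `x` of a function of `(x, t)`. -/
noncomputable def dx (f : ℝ → ℝ → ℂ) : ℝ → ℝ → ℂ :=
  fun x t => deriv (fun y => f y t) x

/-- The partial derivative with respect to `t` of a function of `(x, t)`. -/
noncomputable def dt (f : ℝ → ℝ → ℂ) : ℝ → ℝ → ℂ :=
  fun x t => deriv (fun s => f x s) t

private lemma sliceX {f : ℝ → ℝ → ℂ} (hf : ContDiff ℝ (⊤ : ℕ∞) (Function.uncurry f)) (x t : ℝ) :
    HasDerivAt (fun y => f y t) (dx f x t) x := by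
  have h : Differentiable ℝ (fun y : ℝ => f y t) :=
    (hf.differentiable (by simp)).comp (differentiable_id.prodMk (differentiable_const t))
  exact (h x).hasDerivAt

private lemma sliceT {f : ℝ → ℝ → ℂ} (hf : ContDiff ℝ (⊤ : ℕ∞) (Function.uncurry f)) (x t : ℝ) :
    HasDerivAt (fun s => f x s) (dt f x t) t := by
  have h : Differentiable ℝ (fun s : ℝ => f x s) :=
    (hf.differentiable (by simp)).comp ((differentiable_const x).prodMk differentiable_id)
  exact (h t).hasDerivAt

private lemma contDiff_dx {f : ℝ → ℝ → ℂ} (hf : ContDiff ℝ (⊤ : ℕ∞) (Function.uncurry f)) :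
    ContDiff ℝ (⊤ : ℕ∞) (Function.uncurry (dx f)) := by
  have h1 : ∀ p : ℝ × ℝ, Function.uncurry (dx f) p
      = fderiv ℝ (Function.uncurry f) p ((1 : ℝ), (0 : ℝ)) := by
    rintro ⟨x, t⟩
    have hg : HasDerivAt (fun y : ℝ => (y, t)) ((1 : ℝ), (0 : ℝ)) x :=
      (hasDerivAt_id x).prodMk (hasDerivAt_const x t)
    have := (((hf.differentiable (by simp)) (x, t)).hasFDerivAt).comp_hasDerivAt x hg
    exact this.deriv
  have h2 : ContDiff ℝ (⊤ : ℕ∞) (fun p : ℝ × ℝ => fderiv ℝ (Function.uncurry f) p ((1:ℝ),(0:ℝ))) :=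
    (hf.fderiv_right (by simp)).clm_apply contDiff_const
  have : Function.uncurry (dx f)
      = fun p : ℝ × ℝ => fderiv ℝ (Function.uncurry f) p ((1:ℝ),(0:ℝ)) := funext h1
  exact this ▸ h2

/-- Binary Darboux transformation: given eigenfunctions `φ^k, φ^l` of the
Schrödinger equation, adjoint eigenfunctions `ψ^i, ψ^l`, and bilinear potentials
`M^{lk}, M^{il}, M^{ll}`, the transformed eigenfunction
`φ^k_l = φ^k − φ^l·M^{lk}/M^{ll}` solves the Schrödinger equation with the new
potential `u_l = u + 2(ln M^{ll})_xx`, and `ψ^i_l = ψ^i − ψ^l·M^{il}/M^{ll}`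
solves the corresponding adjoint equation. -/
theorem binary_darboux_transformation (u φk φl ψi ψl Mlk Mil Mll : ℝ → ℝ → ℂ)
    (hu : ContDiff ℝ (⊤ : ℕ∞) (Function.uncurry u))
    (hφk : ContDiff ℝ (⊤ : ℕ∞) (Function.uncurry φk))
    (hφl : ContDiff ℝ (⊤ : ℕ∞) (Function.uncurry φl))
    (hψi : ContDiff ℝ (⊤ : ℕ∞) (Function.uncurry ψi))
    (hψl : ContDiff ℝ (⊤ : ℕ∞) (Function.uncurry ψl))
    (hMlk : ContDiff ℝ (⊤ : ℕ∞) (Function.uncurry Mlk))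
    (hMil : ContDiff ℝ (⊤ : ℕ∞) (Function.uncurry Mil))
    (hMll : ContDiff ℝ (⊤ : ℕ∞) (Function.uncurry Mll))
    (hSchk : ∀ x t, dt φk x t = dx (dx φk) x t + u x t * φk x t)
    (hSchl : ∀ x t, dt φl x t = dx (dx φl) x t + u x t * φl x t)
    (hAdji : ∀ x t, -(dt ψi x t) = dx (dx ψi) x t + u x t * ψi x t)
    (hAdjl : ∀ x t, -(dt ψl x t) = dx (dx ψl) x t + u x t * ψl x t)
    (hMlkx : ∀ x t, dx Mlk x t = ψl x t * φk x t)
    (hMlkt : ∀ x t, dt Mlk x t = ψl x t * dx φk x t - dx ψl x t * φk x t)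
    (hMilx : ∀ x t, dx Mil x t = ψi x t * φl x t)
    (hMilt : ∀ x t, dt Mil x t = ψi x t * dx φl x t - dx ψi x t * φl x t)
    (hMllx : ∀ x t, dx Mll x t = ψl x t * φl x t)
    (hMllt : ∀ x t, dt Mll x t = ψl x t * dx φl x t - dx ψl x t * φl x t)
    (hMll0 : ∀ x t, Mll x t ≠ 0) :
    (∀ x t, dt (fun y s => φk y s - φl y s * Mlk y s / Mll y s) x t
        = dx (dx (fun y s => φk y s - φl y s * Mlk y s / Mll y s)) x t
          + (u x t + 2 * dx (fun y s => dx Mll y s / Mll y s) x t)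
            * (φk x t - φl x t * Mlk x t / Mll x t))
      ∧ (∀ x t, -(dt (fun y s => ψi y s - ψl y s * Mil y s / Mll y s) x t)
          = dx (dx (fun y s => ψi y s - ψl y s * Mil y s / Mll y s)) x t
            + (u x t + 2 * dx (fun y s => dx Mll y s / Mll y s) x t)
              * (ψi x t - ψl x t * Mil x t / Mll x t)) := by
  constructor
  · intro x t
    have h0 := hMll0 x t
    have hsq : HasDerivAt (fun y => Mll y t ^ 2)
        (dx Mll x t * Mll x t + Mll x t * dx Mll x t) x := by
      simp only [pow_two]; exact (sliceX hMll x t).mul (sliceX hMll x t)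
    have h1 : dt (fun y s => φk y s - φl y s * Mlk y s / Mll y s) x t
        = dt φk x t - ((dt φl x t * Mlk x t + φl x t * dt Mlk x t) * Mll x t
            - φl x t * Mlk x t * dt Mll x t) / Mll x t ^ 2 :=
      ((sliceT hφk x t).sub (((sliceT hφl x t).mul (sliceT hMlk x t)).div
        (sliceT hMll x t) h0)).deriv
    have h2 : dx (fun y s => φk y s - φl y s * Mlk y s / Mll y s)
        = fun y s => dx φk y s - ((dx φl y s * Mlk y s + φl y s * dx Mlk y s) * Mll y s
            - φl y s * Mlk y s * dx Mll y s) / Mll y s ^ 2 := by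
      funext y s
      exact ((sliceX hφk y s).sub (((sliceX hφl y s).mul (sliceX hMlk y s)).div
        (sliceX hMll y s) (hMll0 y s))).deriv
    have h3 : dx (fun y s => dx φk y s - ((dx φl y s * Mlk y s + φl y s * dx Mlk y s) * Mll y s
            - φl y s * Mlk y s * dx Mll y s) / Mll y s ^ 2) x t
        = dx (dx φk) x t
          - ((((dx (dx φl) x t * Mlk x t + dx φl x t * dx Mlk x t)
                + (dx φl x t * dx Mlk x t + φl x t * dx (dx Mlk) x t)) * Mll x t
              + (dx φl x t * Mlk x t + φl x t * dx Mlk x t) * dx Mll x t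
             - ((dx φl x t * Mlk x t + φl x t * dx Mlk x t) * dx Mll x t
                + φl x t * Mlk x t * dx (dx Mll) x t)) * Mll x t ^ 2
            - ((dx φl x t * Mlk x t + φl x t * dx Mlk x t) * Mll x t
                - φl x t * Mlk x t * dx Mll x t)
              * (dx Mll x t * Mll x t + Mll x t * dx Mll x t)) / (Mll x t ^ 2) ^ 2 :=
      ((sliceX (contDiff_dx hφk) x t).sub
        (((((sliceX (contDiff_dx hφl) x t).mul (sliceX hMlk x t)).add
            ((sliceX hφl x t).mul (sliceX (contDiff_dx hMlk) x t))).mul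
              (sliceX hMll x t)).sub
          (((sliceX hφl x t).mul (sliceX hMlk x t)).mul (sliceX (contDiff_dx hMll) x t))
          |>.div hsq (pow_ne_zero 2 h0))).deriv
    have h4 : dx (fun y s => dx Mll y s / Mll y s) x t
        = (dx (dx Mll) x t * Mll x t - dx Mll x t * dx Mll x t) / Mll x t ^ 2 :=
      ((sliceX (contDiff_dx hMll) x t).div (sliceX hMll x t) h0).deriv
    have h5 : dx (dx Mlk) x t = dx ψl x t * φk x t + ψl x t * dx φk x t := by
      have e : dx Mlk = fun y s => ψl y s * φk y s := funext fun y => funext fun s => hMlkx y s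
      rw [e]; exact ((sliceX hψl x t).mul (sliceX hφk x t)).deriv
    have h6 : dx (dx Mll) x t = dx ψl x t * φl x t + ψl x t * dx φl x t := by
      have e : dx Mll = fun y s => ψl y s * φl y s := funext fun y => funext fun s => hMllx y s
      rw [e]; exact ((sliceX hψl x t).mul (sliceX hφl x t)).deriv
    rw [h1, h2, h3, h4, h5, h6, hSchk x t, hSchl x t, hMlkt x t, hMllt x t,
      hMlkx x t, hMllx x t]
    field_simp
    ring
  · intro x t
    have h0 := hMll0 x t
    have hsq : HasDerivAt (fun y => Mll y t ^ 2)
        (dx Mll x t * Mll x t + Mll x t * dx Mll x t) x := by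
      simp only [pow_two]; exact (sliceX hMll x t).mul (sliceX hMll x t)
    have hA1 : dt ψi x t = -(dx (dx ψi) x t + u x t * ψi x t) := by
      linear_combination -hAdji x t
    have hA2 : dt ψl x t = -(dx (dx ψl) x t + u x t * ψl x t) := by
      linear_combination -hAdjl x t
    have h1 : dt (fun y s => ψi y s - ψl y s * Mil y s / Mll y s) x t
        = dt ψi x t - ((dt ψl x t * Mil x t + ψl x t * dt Mil x t) * Mll x t
            - ψl x t * Mil x t * dt Mll x t) / Mll x t ^ 2 :=
      ((sliceT hψi x t).sub (((sliceT hψl x t).mul (sliceT hMil x t)).div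
        (sliceT hMll x t) h0)).deriv
    have h2 : dx (fun y s => ψi y s - ψl y s * Mil y s / Mll y s)
        = fun y s => dx ψi y s - ((dx ψl y s * Mil y s + ψl y s * dx Mil y s) * Mll y s
            - ψl y s * Mil y s * dx Mll y s) / Mll y s ^ 2 := by
      funext y s
      exact ((sliceX hψi y s).sub (((sliceX hψl y s).mul (sliceX hMil y s)).div
        (sliceX hMll y s) (hMll0 y s))).deriv
    have h3 : dx (fun y s => dx ψi y s - ((dx ψl y s * Mil y s + ψl y s * dx Mil y s) * Mll y s
            - ψl y s * Mil y s * dx Mll y s) / Mll y s ^ 2) x t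
        = dx (dx ψi) x t
          - ((((dx (dx ψl) x t * Mil x t + dx ψl x t * dx Mil x t)
                + (dx ψl x t * dx Mil x t + ψl x t * dx (dx Mil) x t)) * Mll x t
              + (dx ψl x t * Mil x t + ψl x t * dx Mil x t) * dx Mll x t
             - ((dx ψl x t * Mil x t + ψl x t * dx Mil x t) * dx Mll x t
                + ψl x t * Mil x t * dx (dx Mll) x t)) * Mll x t ^ 2
            - ((dx ψl x t * Mil x t + ψl x t * dx Mil x t) * Mll x t
                - ψl x t * Mil x t * dx Mll x t)
              * (dx Mll x t * Mll x t + Mll x t * dx Mll x t)) / (Mll x t ^ 2) ^ 2 :=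
      ((sliceX (contDiff_dx hψi) x t).sub
        (((((sliceX (contDiff_dx hψl) x t).mul (sliceX hMil x t)).add
            ((sliceX hψl x t).mul (sliceX (contDiff_dx hMil) x t))).mul
              (sliceX hMll x t)).sub
          (((sliceX hψl x t).mul (sliceX hMil x t)).mul (sliceX (contDiff_dx hMll) x t))
          |>.div hsq (pow_ne_zero 2 h0))).deriv
    have h4 : dx (fun y s => dx Mll y s / Mll y s) x t
        = (dx (dx Mll) x t * Mll x t - dx Mll x t * dx Mll x t) / Mll x t ^ 2 :=
      ((sliceX (contDiff_dx hMll) x t).div (sliceX hMll x t) h0).deriv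
    have h5 : dx (dx Mil) x t = dx ψi x t * φl x t + ψi x t * dx φl x t := by
      have e : dx Mil = fun y s => ψi y s * φl y s := funext fun y => funext fun s => hMilx y s
      rw [e]; exact ((sliceX hψi x t).mul (sliceX hφl x t)).deriv
    have h6 : dx (dx Mll) x t = dx ψl x t * φl x t + ψl x t * dx φl x t := by
      have e : dx Mll = fun y s => ψl y s * φl y s := funext fun y => funext fun s => hMllx y s
      rw [e]; exact ((sliceX hψl x t).mul (sliceX hφl x t)).deriv
    rw [h1, h2, h3, h4, h5, h6, hA1, hA2, hMilt x t, hMllt x t, hMilx x t, hMllx x t]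
    field_simp
    ring
end
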